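/- Let f ∈ S_d and let X be a minimal apolar set of f. If d ≥ ρ(X), then (I_X)_k = f^⊥_k for every integer k with 0 ≤ k ≤ d − ρ(X), where (I_X)_k denotes the degree-k graded piece of I_X. -/

import Mathlib

noncomputable section

open MvPolynomial

/-- The iterated partial-derivative operator `∂^α` acting on polynomials. -/
def diffOp {n : ℕ} (α : Fin n →₀ ℕ) (f : MvPolynomial (Fin n) ℂ) :
    MvPolynomial (Fin n) ℂ :=
  (List.finRange n).foldr (fun i h => (⇑(pderiv (R := ℂ) i))^[α i] h) f

/-- The apolar action `G ∘ f` of the dual polynomial ring `T` on `S`. -/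
def apolar {n : ℕ} (G f : MvPolynomial (Fin n) ℂ) : MvPolynomial (Fin n) ℂ :=
  ∑ α ∈ G.support, G.coeff α • diffOp α f

lemma apolar_eq_sum_subset {n : ℕ} (G f : MvPolynomial (Fin n) ℂ) (s : Finset (Fin n →₀ ℕ))
    (hs : G.support ⊆ s) : apolar G f = ∑ α ∈ s, G.coeff α • diffOp α f :=
  Finset.sum_subset hs fun x _ hx => by
    rw [MvPolynomial.notMem_support_iff.mp hx, zero_smul]

lemma apolar_zero {n : ℕ} (f : MvPolynomial (Fin n) ℂ) : apolar 0 f = 0 := by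
  simp [apolar]

lemma apolar_add {n : ℕ} (G G' f : MvPolynomial (Fin n) ℂ) :
    apolar (G + G') f = apolar G f + apolar G' f := by
  classical
  rw [apolar_eq_sum_subset (G + G') f (G.support ∪ G'.support) (MvPolynomial.support_add),
    apolar_eq_sum_subset G f (G.support ∪ G'.support) Finset.subset_union_left,
    apolar_eq_sum_subset G' f (G.support ∪ G'.support) Finset.subset_union_right,
    ← Finset.sum_add_distrib]
  exact Finset.sum_congr rfl fun α _ => by rw [coeff_add, add_smul]

lemma apolar_smul {n : ℕ} (c : ℂ) (G f : MvPolynomial (Fin n) ℂ) :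
    apolar (c • G) f = c • apolar G f := by
  rw [apolar_eq_sum_subset (c • G) f G.support MvPolynomial.support_smul, apolar,
    Finset.smul_sum]
  exact Finset.sum_congr rfl fun α _ => by rw [coeff_smul, smul_assoc]

/-- The apolar ideal `f^⊥`, as a set: all `G` with `G ∘ f = 0`. -/
def perpSet {n : ℕ} (f : MvPolynomial (Fin n) ℂ) : Set (MvPolynomial (Fin n) ℂ) :=
  {G | apolar G f = 0}

/-- The degree-`k` graded piece `f^⊥_k` of the apolar ideal, as a `ℂ`-submodule. -/
def perpSub {n : ℕ} (f : MvPolynomial (Fin n) ℂ) (k : ℕ) :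
    Submodule ℂ (MvPolynomial (Fin n) ℂ) where
  carrier := {G | G.IsHomogeneous k ∧ apolar G f = 0}
  zero_mem' := ⟨isHomogeneous_zero _ _ _, apolar_zero f⟩
  add_mem' := fun ha hb => ⟨ha.1.add hb.1, by rw [apolar_add, ha.2, hb.2, add_zero]⟩
  smul_mem' := fun c G hG =>
    ⟨by rw [smul_eq_C_mul]; simpa using (isHomogeneous_C _ c).mul hG.1,
     by rw [apolar_smul, hG.2, smul_zero]⟩

/-- The degree-`k` graded piece `f^⊥_k` of the apolar ideal, as a set. -/
def perpPiece {n : ℕ} (f : MvPolynomial (Fin n) ℂ) (k : ℕ) :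
    Set (MvPolynomial (Fin n) ℂ) := (perpSub f k : Set _)

/-- Hilbert function of the apolar algebra `A_f = T/f^⊥` in degree `k`:
`HF_{A_f}(k) = dim T_k − dim f^⊥_k`. -/
def HF {n : ℕ} (f : MvPolynomial (Fin n) ℂ) (k : ℕ) : ℕ :=
  Module.finrank ℂ (homogeneousSubmodule (Fin n) ℂ k) - Module.finrank ℂ (perpSub f k)

/-- The differential length `ℓ(f) = max_k HF_{A_f}(k)`. -/
def ell {n : ℕ} (f : MvPolynomial (Fin n) ℂ) : ℕ := sSup (Set.range (HF f))

/-- Complex projective `n`-space `ℙ^n(ℂ)`. -/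
abbrev Pt (n : ℕ) := Projectivization ℂ (Fin (n + 1) → ℂ)

/-- Degree-`k` graded piece of an ideal, as a set. -/
def idealPiece {n : ℕ} (I : Ideal (MvPolynomial (Fin n) ℂ)) (k : ℕ) :
    Set (MvPolynomial (Fin n) ℂ) := {G | G.IsHomogeneous k ∧ G ∈ I}

/-- The homogeneous vanishing ideal `I_X` of a set of projective points. -/
def vanishingIdeal {n : ℕ} (A : Set (Pt n)) : Ideal (MvPolynomial (Fin (n + 1)) ℂ) :=
  Ideal.span {G | (∃ k, G.IsHomogeneous k) ∧ ∀ p ∈ A, eval p.rep G = 0}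

/-- The linear form with coefficient vector `a`. -/
def lin {n : ℕ} (a : Fin (n + 1) → ℂ) : MvPolynomial (Fin (n + 1)) ℂ :=
  ∑ i, C (a i) * X i

/-- The linear form `ℓ_ξ` attached to a projective point `ξ`. -/
def linOf {n : ℕ} (p : Pt n) : MvPolynomial (Fin (n + 1)) ℂ := lin p.rep

/-- Waring rank: the least `r` such that `f` is a sum of `r` `d`-th powers of linear forms. -/
def wrank {n : ℕ} (d : ℕ) (f : MvPolynomial (Fin (n + 1)) ℂ) : ℕ :=
  sInf {r | ∃ a : Fin r → (Fin (n + 1) → ℂ), f = ∑ i, lin (a i) ^ d}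

/-- `A` is apolar to `f`, i.e. `I_A ⊆ f^⊥`. -/
def isApolar {n : ℕ} (f : MvPolynomial (Fin (n + 1)) ℂ) (A : Set (Pt n)) : Prop :=
  ∀ G ∈ vanishingIdeal A, apolar G f = 0

/-- `A` is a minimal apolar set of `f ∈ S_d`: a finite apolar set of cardinality `rk f`. -/
def isMinApolar {n : ℕ} (d : ℕ) (f : MvPolynomial (Fin (n + 1)) ℂ) (A : Set (Pt n)) : Prop :=
  A.Finite ∧ isApolar f A ∧ A.ncard = wrank d f

/-- The Waring locus of `f`: points belonging to some minimal apolar set. -/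
def waringLocus {n : ℕ} (d : ℕ) (f : MvPolynomial (Fin (n + 1)) ℂ) : Set (Pt n) :=
  {p | ∃ A, isMinApolar d f A ∧ p ∈ A}

open Classical in
/-- The regularity (interpolation degree) `ρ(A)` of a set of points: the least `k` admitting
degree-`k` interpolation forms `U_p` with `U_p(q) = δ_{pq}`. -/
def interpReg {n : ℕ} (A : Set (Pt n)) : ℕ :=
  sInf {k | ∃ U : Pt n → MvPolynomial (Fin (n + 1)) ℂ,
    ∀ p ∈ A, (U p).IsHomogeneous k ∧ ∀ q ∈ A, eval q.rep (U p) = if q = p then 1 else 0}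

/-- Zero locus in projective space of a set of (homogeneous) polynomials. -/
def zeroLocus {n : ℕ} (S : Set (MvPolynomial (Fin (n + 1)) ℂ)) : Set (Pt n) :=
  {p | ∀ G ∈ S, eval p.rep G = 0}

/-- `W` is Zariski dense in `Z`: every homogeneous form vanishing on `W` vanishes on `Z`. -/
def denseIn {n : ℕ} (W Z : Set (Pt n)) : Prop :=
  ∀ G : MvPolynomial (Fin (n + 1)) ℂ, (∃ k, G.IsHomogeneous k) →
    (∀ p ∈ W, eval p.rep G = 0) → ∀ p ∈ Z, eval p.rep G = 0

/-- The coordinate point with `1` in position `i` and `0` elsewhere. -/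
def basePt (n : ℕ) (i : Fin (n + 1)) : Pt n :=
  Projectivization.mk ℂ (Pi.single i 1) (by
    intro h
    have := congrFun h i
    simp at this)

/-- Three projective points are collinear: their representatives are linearly dependent. -/
def collin3 {n : ℕ} (p q r : Pt n) : Prop := ¬ LinearIndependent ℂ ![p.rep, q.rep, r.rep]

/-- A Zariski-closed subset of `ℙ^n`: the common zero locus of a family of homogeneous forms. -/
def zClosed {n : ℕ} (Z : Set (Pt n)) : Prop :=
  ∃ S : Set (MvPolynomial (Fin (n + 1)) ℂ),
    (∀ G ∈ S, ∃ k, G.IsHomogeneous k) ∧ Z = zeroLocus S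

/-- `W` is Zariski dense in `Z`: every Zariski-closed set containing `W` contains `Z`. -/
def zDense {n : ℕ} (W Z : Set (Pt n)) : Prop :=
  ∀ Zc : Set (Pt n), zClosed Zc → W ⊆ Zc → Z ⊆ Zc

/-- An irreducible Zariski-closed set: nonempty and not the union of two proper closed
subsets of itself. -/
def zIrred {n : ℕ} (Z : Set (Pt n)) : Prop :=
  Z.Nonempty ∧ ∀ Z₁ Z₂ : Set (Pt n), zClosed Z₁ → zClosed Z₂ → Z₁ ⊆ Z → Z₂ ⊆ Z →
    Z = Z₁ ∪ Z₂ → Z₁ = Z ∨ Z₂ = Z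

/-- `P` lies in the projective linear span of `r` points of `Xv`. -/
def xRankLe {n : ℕ} (Xv : Set (Pt n)) (P : Pt n) (r : ℕ) : Prop :=
  ∃ Q : Fin r → Pt n, (∀ i, Q i ∈ Xv) ∧
    P.rep ∈ Submodule.span ℂ (Set.range fun i => (Q i).rep)

/-- The `X`-rank of a point `P` (with value `+∞` if `P` is in no finite span). -/
def xRank {n : ℕ} (Xv : Set (Pt n)) (P : Pt n) : ℕ∞ :=
  sInf {r : ℕ∞ | ∃ m : ℕ, r = (m : ℕ∞) ∧ xRankLe Xv P m}

/-- `Xv` spans `ℙ^n`: every point is in the span of finitely many points of `Xv`. -/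
def spansAll {n : ℕ} (Xv : Set (Pt n)) : Prop := ∀ P : Pt n, ∃ m, xRankLe Xv P m

/-- The generic `X`-rank: the least `r` such that points of `X`-rank `≤ r` are dense. -/
def genXRank {n : ℕ} (Xv : Set (Pt n)) : ℕ :=
  sInf {m : ℕ | zDense {P | xRankLe Xv P m} Set.univ}

/-- The `X`-decomposition locus of `P`, where `r = rk_X(P)`. -/
def decompLocus {n : ℕ} (Xv : Set (Pt n)) (P : Pt n) (r : ℕ) : Set (Pt n) :=
  {Q | Q ∈ Xv ∧ ∃ Q' : Fin (r - 1) → Pt n, (∀ i, Q' i ∈ Xv) ∧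
    P.rep ∈ Submodule.span ℂ (insert Q.rep (Set.range fun i => (Q' i).rep))}

/-- Zariski density in the affine space `ℂ^ι`: every polynomial function vanishing on `W`
vanishes on `Z`. -/
def zDenseAff {ι : Type} (W Z : Set (ι → ℂ)) : Prop :=
  ∀ P : MvPolynomial ι ℂ, (∀ w ∈ W, MvPolynomial.eval w P = 0) →
    ∀ z ∈ Z, MvPolynomial.eval z P = 0

/-- The generic Waring rank of degree-`d` forms in `n+1` variables: the least `r` such that
forms of rank `≤ r` are Zariski dense in `S_d` (viewed in coefficient space). -/
def genWaringRank (n d : ℕ) : ℕ :=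
  sInf {r : ℕ | zDenseAff
    {φ : (Fin (n + 1) →₀ ℕ) → ℂ | ∃ f : MvPolynomial (Fin (n + 1)) ℂ,
      f.IsHomogeneous d ∧ wrank d f ≤ r ∧ φ = fun m => coeff m f}
    {φ : (Fin (n + 1) →₀ ℕ) → ℂ | ∃ f : MvPolynomial (Fin (n + 1)) ℂ,
      f.IsHomogeneous d ∧ φ = fun m => coeff m f}}

/-!
Interpolation forms `V_ξ` of degree `d` exist because `ρ(X) ≤ d`. Since
`G - ∑ G(ξ) V_ξ ∈ I_X ⊆ f^⊥` for every form `G` of degree `d`, the apolarity pairing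
`⟨G, f⟩ = (G ∘ f)(0)` depends only on the values of `G` on `X`, and nondegeneracy of the pairing
yields `f = ∑_{ξ ∈ X} c_ξ ℓ_ξ^d`. Minimality of `X` forces every `c_ξ ≠ 0`. Now if `G ∈ f^⊥_k`
and `W_ξ` is the interpolation form of degree `d - k` at `ξ`, then `0 = ⟨W_ξ G, f⟩ = d! c_ξ G(ξ)`,
so `G` vanishes on `X`.
-/

lemma MvPolynomial.IsHomogeneous.smul {σ R : Type*} [CommSemiring R] {φ : MvPolynomial σ R}
    {m : ℕ} (hφ : φ.IsHomogeneous m) (r : R) : (r • φ).IsHomogeneous m := by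
  rw [smul_eq_C_mul]
  exact hφ.C_mul r

section ApolarAction

variable {n : ℕ}

def diffOpLinear (α : Fin n →₀ ℕ) : Module.End ℂ (MvPolynomial (Fin n) ℂ) :=
  (List.finRange n).foldr (fun i L => (pderiv (R := ℂ) i : Module.End ℂ _) ^ α i * L) 1

lemma diffOpLinear_apply (α : Fin n →₀ ℕ) (f : MvPolynomial (Fin n) ℂ) :
    diffOpLinear α f = diffOp α f := by
  unfold diffOpLinear diffOp
  induction List.finRange n with
  | nil => rfl
  | cons i L ih => rw [List.foldr_cons, List.foldr_cons, Module.End.mul_apply, ih,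
      Module.End.pow_apply, Derivation.coeFn_coe]

lemma diffOp_add (α : Fin n →₀ ℕ) (f g : MvPolynomial (Fin n) ℂ) :
    diffOp α (f + g) = diffOp α f + diffOp α g := by
  simp only [← diffOpLinear_apply, map_add]

lemma diffOp_smul (α : Fin n →₀ ℕ) (c : ℂ) (f : MvPolynomial (Fin n) ℂ) :
    diffOp α (c • f) = c • diffOp α f := by
  simp only [← diffOpLinear_apply, map_smul]

lemma iterate_pderiv_monomial (i : Fin n) (m : ℕ) (γ : Fin n →₀ ℕ) (c : ℂ) :
    (⇑(pderiv (R := ℂ) i))^[m] (monomial γ c) =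
      monomial (γ - Finsupp.single i m) (c * (γ i).descFactorial m) := by
  induction m with
  | zero => simp
  | succ m ih =>
    rw [Function.iterate_succ_apply', ih, pderiv_monomial, tsub_tsub, ← Finsupp.single_add,
      Finsupp.tsub_apply, Finsupp.single_eq_same, Nat.descFactorial_succ]
    push_cast
    ring_nf

lemma foldr_iterate_pderiv_monomial (α γ : Fin n →₀ ℕ) (c : ℂ) {L : List (Fin n)}
    (hL : L.Nodup) :
    L.foldr (fun i h => (⇑(pderiv (R := ℂ) i))^[α i] h) (monomial γ c) =
      monomial (γ - (L.map fun i => Finsupp.single i (α i)).sum)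
        (c * (L.map fun i => ((γ i).descFactorial (α i) : ℂ)).prod) := by
  induction L with
  | nil => simp
  | cons i L ih =>
    obtain ⟨hiL, hL⟩ := List.nodup_cons.mp hL
    have hβi : (L.map fun j => Finsupp.single j (α j)).sum i = 0 := by
      rw [← Finsupp.applyAddHom_apply, map_list_sum, List.map_map]
      exact List.sum_eq_zero fun x hx => by
        obtain ⟨j, hj, rfl⟩ := List.mem_map.mp hx
        exact Finsupp.single_eq_of_ne (by rintro rfl; exact hiL hj)
    rw [List.foldr_cons, ih hL, iterate_pderiv_monomial, Finsupp.tsub_apply, hβi, tsub_zero,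
      List.map_cons, List.sum_cons, List.map_cons, List.prod_cons, tsub_tsub,
      add_comm (Finsupp.single i (α i)), mul_assoc, mul_comm ((γ i).descFactorial (α i) : ℂ)]

lemma diffOp_monomial (α γ : Fin n →₀ ℕ) (c : ℂ) :
    diffOp α (monomial γ c) =
      monomial (γ - α) (c * ∏ i, ((γ i).descFactorial (α i) : ℂ)) := by
  rw [diffOp, foldr_iterate_pderiv_monomial α γ c (List.nodup_finRange n), ← Fin.sum_univ_def,
    Finsupp.univ_sum_single, ← Fin.prod_univ_def]

lemma diffOp_zero (f : MvPolynomial (Fin n) ℂ) : diffOp 0 f = f := by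
  induction f using MvPolynomial.induction_on' with
  | add p q hp hq => rw [diffOp_add, hp, hq]
  | monomial γ c => simp [diffOp_monomial]

lemma coeff_zero_diffOp (α : Fin n →₀ ℕ) (f : MvPolynomial (Fin n) ℂ) :
    coeff 0 (diffOp α f) = (∏ i, ((α i).factorial : ℂ)) * coeff α f := by
  induction f using MvPolynomial.induction_on' with
  | add p q hp hq => rw [diffOp_add, coeff_add, hp, hq, coeff_add, mul_add]
  | monomial γ c =>
    rw [diffOp_monomial, coeff_monomial, coeff_monomial]
    by_cases hγ : γ = α
    · subst hγ
      simp [Nat.descFactorial_self, mul_comm]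
    · rw [if_neg hγ, mul_zero, ite_eq_right_iff]
      intro hle
      obtain ⟨i, hi⟩ : ∃ i, γ i < α i := by
        by_contra! h
        exact hγ (le_antisymm (tsub_eq_zero_iff_le.mp hle) (Finsupp.le_def.mpr h))
      rw [Finset.prod_eq_zero (Finset.mem_univ i)
        (by simp [Nat.descFactorial_eq_zero_iff_lt.mpr hi]), mul_zero]

lemma diffOp_diffOp (α β : Fin n →₀ ℕ) (f : MvPolynomial (Fin n) ℂ) :
    diffOp α (diffOp β f) = diffOp (α + β) f := by
  induction f using MvPolynomial.induction_on' with
  | add p q hp hq => rw [diffOp_add, diffOp_add, diffOp_add, hp, hq]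
  | monomial γ c =>
    rw [diffOp_monomial, diffOp_monomial, diffOp_monomial, tsub_tsub, add_comm β α, mul_assoc,
      ← Finset.prod_mul_distrib]
    congr 2
    refine Finset.prod_congr rfl fun i _ => ?_
    rw [Finsupp.tsub_apply, Finsupp.add_apply, add_comm (α i), ← Nat.cast_mul,
      ← Nat.descFactorial_mul_descFactorial (Nat.le_add_right _ _), Nat.add_sub_cancel_left,
      mul_comm]

lemma apolar_add_right (G f g : MvPolynomial (Fin n) ℂ) :
    apolar G (f + g) = apolar G f + apolar G g := by
  simp only [apolar, diffOp_add, smul_add, Finset.sum_add_distrib]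

lemma apolar_smul_right (c : ℂ) (G f : MvPolynomial (Fin n) ℂ) :
    apolar G (c • f) = c • apolar G f := by
  simp only [apolar, diffOp_smul, smul_comm _ c, Finset.smul_sum]

def apolarBilin :
    MvPolynomial (Fin n) ℂ →ₗ[ℂ] MvPolynomial (Fin n) ℂ →ₗ[ℂ] MvPolynomial (Fin n) ℂ :=
  LinearMap.mk₂ ℂ apolar apolar_add apolar_smul apolar_add_right apolar_smul_right

def apolarPairing : MvPolynomial (Fin n) ℂ →ₗ[ℂ] MvPolynomial (Fin n) ℂ →ₗ[ℂ] ℂ :=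
  apolarBilin.compr₂ (lcoeff ℂ 0)

lemma apolarPairing_apply (G f : MvPolynomial (Fin n) ℂ) :
    apolarPairing G f = coeff 0 (apolar G f) :=
  rfl

lemma apolar_zero_right (G : MvPolynomial (Fin n) ℂ) : apolar G 0 = 0 :=
  map_zero (apolarBilin G)

lemma apolar_monomial (α : Fin n →₀ ℕ) (c : ℂ) (f : MvPolynomial (Fin n) ℂ) :
    apolar (monomial α c) f = c • diffOp α f := by
  rw [apolar_eq_sum_subset _ f {α} (support_monomial_subset), Finset.sum_singleton,
    coeff_monomial, if_pos rfl]

lemma apolar_C (c : ℂ) (f : MvPolynomial (Fin n) ℂ) : apolar (C c) f = c • f := by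
  rw [← monomial_zero', apolar_monomial, diffOp_zero]

lemma apolar_mul (H G f : MvPolynomial (Fin n) ℂ) :
    apolar (H * G) f = apolar H (apolar G f) := by
  induction H using MvPolynomial.induction_on' with
  | add p q hp hq => rw [add_mul, apolar_add, apolar_add, hp, hq]
  | monomial α a =>
    induction G using MvPolynomial.induction_on' with
    | add p q hp hq => rw [mul_add, apolar_add, hp, hq, apolar_add, apolar_add_right]
    | monomial β b =>
      rw [monomial_mul, apolar_monomial, apolar_monomial, apolar_monomial, diffOp_smul,
        diffOp_diffOp, mul_smul]

lemma apolarPairing_monomial_one (α : Fin n →₀ ℕ) (f : MvPolynomial (Fin n) ℂ) :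
    apolarPairing (monomial α 1) f = (∏ i, ((α i).factorial : ℂ)) * coeff α f := by
  rw [apolarPairing_apply, apolar_monomial, one_smul, coeff_zero_diffOp]

lemma eq_zero_of_forall_apolarPairing_eq_zero {d : ℕ} {g : MvPolynomial (Fin n) ℂ}
    (hg : g.IsHomogeneous d) (h : ∀ G : MvPolynomial (Fin n) ℂ, G.IsHomogeneous d →
      apolarPairing G g = 0) : g = 0 := by
  ext α
  rw [coeff_zero]
  by_contra hα
  have hdeg : α.degree = d := by
    rw [Finsupp.degree_apply, ← hg.degree_eq_sum_deg_support (mem_support_iff.mpr hα)]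
  have := h _ (isHomogeneous_monomial 1 hdeg)
  rw [apolarPairing_monomial_one] at this
  exact hα ((mul_eq_zero.mp this).resolve_left
    (Finset.prod_ne_zero_iff.mpr fun i _ => Nat.cast_ne_zero.mpr (Nat.factorial_ne_zero _)))

end ApolarAction

section LinearForms

variable {n : ℕ}

lemma lin_isHomogeneous (a : Fin (n + 1) → ℂ) : (lin a).IsHomogeneous 1 :=
  IsHomogeneous.sum _ _ _ fun i _ => isHomogeneous_C_mul_X (a i) i

lemma lin_pow_isHomogeneous (a : Fin (n + 1) → ℂ) (d : ℕ) : (lin a ^ d).IsHomogeneous d := by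
  simpa using (lin_isHomogeneous a).pow d

lemma lin_smul (t : ℂ) (a : Fin (n + 1) → ℂ) : lin (t • a) = C t * lin a := by
  simp only [lin, Finset.mul_sum, Pi.smul_apply, smul_eq_mul, map_mul, mul_assoc]

lemma pderiv_lin (i : Fin (n + 1)) (a : Fin (n + 1) → ℂ) : pderiv i (lin a) = C (a i) := by
  simp [lin, pderiv_X, Pi.single_apply]

lemma iterate_pderiv_C_mul_lin_pow (i : Fin (n + 1)) (a : Fin (n + 1) → ℂ) (c : ℂ) (m t : ℕ) :
    (⇑(pderiv (R := ℂ) i))^[t] (C c * lin a ^ m) =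
      C (c * m.descFactorial t * a i ^ t) * lin a ^ (m - t) := by
  induction t with
  | zero => simp
  | succ t ih =>
    rw [Function.iterate_succ_apply', ih, pderiv_C_mul, pderiv_pow, pderiv_lin, Nat.sub_sub,
      Nat.descFactorial_succ]
    simp only [map_mul, map_pow, map_natCast, Nat.cast_mul]
    ring

lemma foldr_iterate_pderiv_C_mul_lin_pow (α : Fin (n + 1) →₀ ℕ) (a : Fin (n + 1) → ℂ)
    (c : ℂ) (m : ℕ) (L : List (Fin (n + 1))) :
    L.foldr (fun i h => (⇑(pderiv (R := ℂ) i))^[α i] h) (C c * lin a ^ m) =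
      C (c * m.descFactorial (L.map α).sum * (L.map fun i => a i ^ α i).prod) *
        lin a ^ (m - (L.map α).sum) := by
  induction L with
  | nil => simp
  | cons i L ih =>
    rw [List.foldr_cons, ih, iterate_pderiv_C_mul_lin_pow, List.map_cons, List.sum_cons,
      List.map_cons, List.prod_cons, Nat.sub_sub, add_comm (α i),
      ← Nat.descFactorial_mul_descFactorial (Nat.le_add_right _ (α i)), Nat.add_sub_cancel_left]
    push_cast
    ring_nf

lemma diffOp_lin_pow (α : Fin (n + 1) →₀ ℕ) (a : Fin (n + 1) → ℂ) (m : ℕ) :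
    diffOp α (lin a ^ m) =
      C (m.descFactorial α.degree * ∏ i, a i ^ α i) * lin a ^ (m - α.degree) := by
  have h := foldr_iterate_pderiv_C_mul_lin_pow α a 1 m (List.finRange (n + 1))
  rw [C_1, one_mul, one_mul, ← Fin.sum_univ_def, ← Fin.prod_univ_def,
    ← Finsupp.degree_eq_sum] at h
  exact h

lemma apolar_lin_pow {d : ℕ} {G : MvPolynomial (Fin (n + 1)) ℂ} (hG : G.IsHomogeneous d)
    (a : Fin (n + 1) → ℂ) :
    apolar G (lin a ^ d) = C (d.factorial * eval a G) := by
  rw [apolar, eval_eq', Finset.mul_sum, map_sum]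
  refine Finset.sum_congr rfl fun α hα => ?_
  have hdeg : α.degree = d := (hG.degree_eq_sum_deg_support hα).symm
  rw [diffOp_lin_pow, hdeg, Nat.descFactorial_self, Nat.sub_self, pow_zero, mul_one,
    smul_eq_C_mul, ← map_mul]
  ring_nf

lemma apolarPairing_lin_pow {d : ℕ} {G : MvPolynomial (Fin (n + 1)) ℂ}
    (hG : G.IsHomogeneous d) (a : Fin (n + 1) → ℂ) :
    apolarPairing G (lin a ^ d) = d.factorial * eval a G := by
  rw [apolarPairing_apply, apolar_lin_pow hG, coeff_zero_C]

end LinearForms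

section Interpolation

variable {n : ℕ}

open Classical

def IsInterpolationFamily (A : Set (Pt n)) (k : ℕ) (U : Pt n → MvPolynomial (Fin (n + 1)) ℂ) :
    Prop :=
  ∀ p ∈ A, (U p).IsHomogeneous k ∧ ∀ q ∈ A, eval q.rep (U p) = if q = p then 1 else 0

lemma exists_linearForm_eval_eq_zero_ne_zero (p q : Pt n) :
    ∃ L : MvPolynomial (Fin (n + 1)) ℂ,
      L.IsHomogeneous 1 ∧ eval q.rep L = 0 ∧ (p ≠ q → eval p.rep L ≠ 0) := by
  obtain ⟨j, hj⟩ : ∃ j, q.rep j ≠ 0 := Function.ne_iff.mp q.rep_nonzero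
  by_cases hpq : p = q
  · exact ⟨0, isHomogeneous_zero _ _ _, map_zero _, fun h => absurd hpq h⟩
  -- the 2 × 2 minors of the matrix with rows `p.rep`, `q.rep` cannot all vanish
  obtain ⟨m, hm⟩ : ∃ m, q.rep j * p.rep m - q.rep m * p.rep j ≠ 0 := by
    by_contra! h
    apply hpq
    rw [← p.mk_rep, ← q.mk_rep, Projectivization.mk_eq_mk_iff']
    refine ⟨p.rep j / q.rep j, funext fun i => ?_⟩
    simp only [Pi.smul_apply, smul_eq_mul]
    field_simp
    linear_combination -h i
  refine ⟨C (q.rep j) * X m - C (q.rep m) * X j,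
    (isHomogeneous_C_mul_X _ _).sub (isHomogeneous_C_mul_X _ _), ?_, fun _ => ?_⟩
  · simp only [map_sub, map_mul, eval_C, eval_X]
    ring
  · simpa only [map_sub, map_mul, eval_C, eval_X] using hm

lemma Set.Finite.exists_isInterpolationFamily {A : Set (Pt n)} (hA : A.Finite) :
    ∃ k U, IsInterpolationFamily A k U := by
  choose L hL using exists_linearForm_eval_eq_zero_ne_zero (n := n)
  set P : Pt n → MvPolynomial (Fin (n + 1)) ℂ := fun p => ∏ q ∈ hA.toFinset.erase p, L p q
  have hPp : ∀ p, eval p.rep (P p) ≠ 0 := fun p => by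
    simpa only [P, map_prod] using Finset.prod_ne_zero_iff.mpr fun q hq =>
      (hL p q).2.2 (Finset.ne_of_mem_erase hq).symm
  refine ⟨hA.toFinset.card - 1, fun p => C (eval p.rep (P p))⁻¹ * P p, fun p hp => ⟨?_, ?_⟩⟩
  · have := IsHomogeneous.prod (hA.toFinset.erase p) (L p) _ fun q _ => (hL p q).1
    rw [Finset.sum_const, smul_eq_mul, mul_one,
      Finset.card_erase_of_mem (hA.mem_toFinset.mpr hp)] at this
    exact this.C_mul _
  · intro q hq
    split_ifs with hqp
    · rw [hqp, map_mul, eval_C, inv_mul_cancel₀ (hPp p)]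
    · have hPq : eval q.rep (P p) = 0 := by
        rw [map_prod]
        exact Finset.prod_eq_zero (Finset.mem_erase.mpr ⟨hqp, hA.mem_toFinset.mpr hq⟩)
          (hL p q).2.1
      rw [map_mul, hPq, mul_zero]

lemma IsInterpolationFamily.exists_of_le {A : Set (Pt n)} {k m : ℕ}
    {U : Pt n → MvPolynomial (Fin (n + 1)) ℂ} (hU : IsInterpolationFamily A k U) (hkm : k ≤ m) :
    ∃ W, IsInterpolationFamily A m W := by
  choose j hj using fun p : Pt n => Function.ne_iff.mp p.rep_nonzero
  refine ⟨fun p => C ((p.rep (j p))⁻¹ ^ (m - k)) * (X (j p) ^ (m - k) * U p),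
    fun p hp => ⟨?_, fun q hq => ?_⟩⟩
  · have := ((isHomogeneous_X_pow (j p) (m - k)).mul (hU p hp).1).C_mul
      ((p.rep (j p))⁻¹ ^ (m - k))
    rwa [Nat.sub_add_cancel hkm] at this
  · rw [map_mul, map_mul, eval_C, map_pow, eval_X, (hU p hp).2 q hq]
    split_ifs with hqp
    · rw [hqp, mul_one, ← mul_pow, inv_mul_cancel₀ (hj p), one_pow]
    · rw [mul_zero, mul_zero]

lemma exists_isInterpolationFamily_of_interpReg_le {A : Set (Pt n)} (hA : A.Finite) {m : ℕ}
    (hm : interpReg A ≤ m) : ∃ W, IsInterpolationFamily A m W := by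
  obtain ⟨U, hU⟩ : ∃ U, IsInterpolationFamily A (interpReg A) U :=
    Nat.sInf_mem (s := {k | ∃ U, IsInterpolationFamily A k U}) hA.exists_isInterpolationFamily
  exact hU.exists_of_le hm

lemma IsInterpolationFamily.sum_mul_eval {A : Set (Pt n)} {k : ℕ}
    {U : Pt n → MvPolynomial (Fin (n + 1)) ℂ} (hU : IsInterpolationFamily A k U) (hA : A.Finite)
    {p : Pt n} (hp : p ∈ A) (c : Pt n → ℂ) :
    ∑ q ∈ hA.toFinset, c q * eval q.rep (U p) = c p := by
  rw [Finset.sum_eq_single_of_mem p (hA.mem_toFinset.mpr hp) fun q hq hqp => by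
      rw [(hU p hp).2 q (hA.mem_toFinset.mp hq), if_neg hqp, mul_zero],
    (hU p hp).2 p hp, if_pos rfl, mul_one]

lemma IsInterpolationFamily.eval_sum_smul {A : Set (Pt n)} {k : ℕ}
    {U : Pt n → MvPolynomial (Fin (n + 1)) ℂ} (hU : IsInterpolationFamily A k U) (hA : A.Finite)
    {q : Pt n} (hq : q ∈ A) (c : Pt n → ℂ) :
    eval q.rep (∑ p ∈ hA.toFinset, c p • U p) = c q := by
  rw [map_sum, Finset.sum_eq_single_of_mem q (hA.mem_toFinset.mpr hq) fun p hp hpq => by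
      rw [smul_eval, (hU p (hA.mem_toFinset.mp hp)).2 q hq, if_neg (Ne.symm hpq), mul_zero],
    smul_eval, (hU q hq).2 q hq, if_pos rfl, mul_one]

end Interpolation

section Apolarity

variable {n d : ℕ}

lemma mem_vanishingIdeal_of_eval_eq_zero {A : Set (Pt n)} {G : MvPolynomial (Fin (n + 1)) ℂ}
    {k : ℕ} (hG : G.IsHomogeneous k) (hA : ∀ p ∈ A, eval p.rep G = 0) :
    G ∈ vanishingIdeal A :=
  Ideal.subset_span ⟨⟨k, hG⟩, hA⟩

lemma apolarPairing_sum_smul_lin_pow {ι : Type*} {G : MvPolynomial (Fin (n + 1)) ℂ}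
    (hG : G.IsHomogeneous d) (s : Finset ι) (c : ι → ℂ) (a : ι → Fin (n + 1) → ℂ) :
    apolarPairing G (∑ i ∈ s, c i • lin (a i) ^ d) =
      d.factorial * ∑ i ∈ s, c i * eval (a i) G := by
  simp only [map_sum, map_smul, apolarPairing_lin_pow hG, smul_eq_mul, Finset.mul_sum]
  exact Finset.sum_congr rfl fun i _ => by ring

lemma apolarPairing_eq_sum_eval_mul {A : Set (Pt n)} (hA : A.Finite)
    {f : MvPolynomial (Fin (n + 1)) ℂ} (hap : isApolar f A)
    {V : Pt n → MvPolynomial (Fin (n + 1)) ℂ} (hV : IsInterpolationFamily A d V)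
    {G : MvPolynomial (Fin (n + 1)) ℂ} (hG : G.IsHomogeneous d) :
    apolarPairing G f = ∑ ξ ∈ hA.toFinset, eval ξ.rep G * apolarPairing (V ξ) f := by
  set H := ∑ ξ ∈ hA.toFinset, eval ξ.rep G • V ξ
  have hGH : G - H ∈ vanishingIdeal A := by
    refine mem_vanishingIdeal_of_eval_eq_zero (k := d)
      (hG.sub (IsHomogeneous.sum _ _ _ fun ξ hξ => (hV ξ (hA.mem_toFinset.mp hξ)).1.smul _))
      fun p hp => ?_
    rw [map_sub, hV.eval_sum_smul hA hp, sub_self]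
  have hsplit : apolarPairing G f = apolarPairing (G - H) f + apolarPairing H f := by
    rw [← LinearMap.add_apply, ← map_add, sub_add_cancel]
  rw [hsplit, apolarPairing_apply (G - H), hap _ hGH, coeff_zero, zero_add, LinearMap.map_sum₂]
  simp only [map_smul, LinearMap.smul_apply, smul_eq_mul]

lemma exists_eq_sum_smul_lin_pow_of_isApolar {A : Set (Pt n)} (hA : A.Finite)
    {f : MvPolynomial (Fin (n + 1)) ℂ} (hf : f.IsHomogeneous d) (hap : isApolar f A)
    (hreg : interpReg A ≤ d) :
    ∃ c : Pt n → ℂ, f = ∑ ξ ∈ hA.toFinset, c ξ • lin ξ.rep ^ d := by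
  obtain ⟨V, hV⟩ := exists_isInterpolationFamily_of_interpReg_le hA hreg
  refine ⟨fun ξ => apolarPairing (V ξ) f / d.factorial, ?_⟩
  rw [← sub_eq_zero]
  refine eq_zero_of_forall_apolarPairing_eq_zero
    (hf.sub (IsHomogeneous.sum _ _ _ fun ξ _ => (lin_pow_isHomogeneous _ d).smul _))
    fun G hG => ?_
  rw [map_sub, apolarPairing_sum_smul_lin_pow hG, apolarPairing_eq_sum_eval_mul hA hap hV hG,
    Finset.mul_sum, sub_eq_zero]
  refine Finset.sum_congr rfl fun ξ _ => ?_
  field_simp [Nat.factorial_ne_zero]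

end Apolarity

section WaringRank

variable {n d : ℕ}

lemma wrank_zero_right (d : ℕ) : wrank d (0 : MvPolynomial (Fin (n + 1)) ℂ) = 0 :=
  Nat.sInf_eq_zero.mpr (Or.inl ⟨Fin.elim0, by simp⟩)

lemma wrank_le_card_of_eq_sum {ι : Type*} (hd : d ≠ 0) {f : MvPolynomial (Fin (n + 1)) ℂ}
    (s : Finset ι) (c : ι → ℂ) (a : ι → Fin (n + 1) → ℂ)
    (hf : f = ∑ i ∈ s, c i • lin (a i) ^ d) : wrank d f ≤ s.card := by
  -- over `ℂ` each coefficient is a `d`-th power and can be absorbed into its linear form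
  choose t ht using fun i => IsAlgClosed.exists_pow_nat_eq (c i) (Nat.pos_of_ne_zero hd)
  refine Nat.sInf_le ⟨fun j => t (s.equivFin.symm j) • a (s.equivFin.symm j), ?_⟩
  rw [hf, ← s.sum_coe_sort, ← s.equivFin.symm.sum_comp]
  simp only [lin_smul, mul_pow, ← map_pow, ht, smul_eq_C_mul]

lemma ne_zero_of_isMinApolar {f : MvPolynomial (Fin (n + 1)) ℂ} {A : Set (Pt n)}
    (hmin : isMinApolar d f A) (hA : A.Nonempty) : f ≠ 0 := by
  rintro rfl
  have hcard := hmin.2.2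
  rw [wrank_zero_right, Set.ncard_eq_zero hmin.1] at hcard
  exact hA.ne_empty hcard

open Classical in
lemma coeff_ne_zero_of_isMinApolar (hd : d ≠ 0) {f : MvPolynomial (Fin (n + 1)) ℂ}
    {A : Set (Pt n)} (hmin : isMinApolar d f A) {c : Pt n → ℂ}
    (hc : f = ∑ ξ ∈ hmin.1.toFinset, c ξ • lin ξ.rep ^ d) {ξ : Pt n} (hξ : ξ ∈ A) :
    c ξ ≠ 0 := by
  intro h0
  have hA : A.Finite := hmin.1
  have hξA := hA.mem_toFinset.mpr hξ
  have hle : wrank d f ≤ (hA.toFinset.erase ξ).card :=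
    wrank_le_card_of_eq_sum hd _ c (fun η => η.rep)
      (by rwa [Finset.sum_erase _ (by rw [h0, zero_smul])])
  rw [← hmin.2.2, Set.ncard_eq_toFinset_card A hA, Finset.card_erase_of_mem hξA] at hle
  have := Finset.card_pos.mpr ⟨ξ, hξA⟩
  omega

end WaringRank

lemma eval_eq_zero_of_mem_perpPiece {n d k : ℕ} {f : MvPolynomial (Fin (n + 1)) ℂ}
    (hf : f.IsHomogeneous d) {A : Set (Pt n)} (hmin : isMinApolar d f A)
    (hk : k + interpReg A ≤ d) {G : MvPolynomial (Fin (n + 1)) ℂ} (hG : G ∈ perpPiece f k)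
    {ξ : Pt n} (hξ : ξ ∈ A) : eval ξ.rep G = 0 := by
  obtain ⟨hGk, hGf⟩ := hG
  rcases Nat.eq_zero_or_pos d with rfl | hd
  -- for `d = 0` no coefficient can be absorbed into `ℓ^0 = 1`, but then `G` is a constant
  · obtain rfl : k = 0 := by omega
    have hG0 : G = C (coeff 0 G) :=
      totalDegree_eq_zero_iff_eq_C.mp ((totalDegree_zero_iff_isHomogeneous _).mpr hGk)
    rw [hG0, apolar_C] at hGf
    rw [hG0, eval_C]
    exact (smul_eq_zero.mp hGf).resolve_right (ne_zero_of_isMinApolar hmin ⟨ξ, hξ⟩)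
  have hA : A.Finite := hmin.1
  obtain ⟨c, hc⟩ := exists_eq_sum_smul_lin_pow_of_isApolar hA hf hmin.2.1 (by omega)
  obtain ⟨W, hW⟩ := exists_isInterpolationFamily_of_interpReg_le hA (m := d - k) (by omega)
  have hWG : (W ξ * G).IsHomogeneous d := by
    simpa only [Nat.sub_add_cancel (show k ≤ d by omega)] using (hW ξ hξ).1.mul hGk
  -- compute `⟨W_ξ G, f⟩` from the decomposition of `f`, and from `G ∘ f = 0`
  have key : d.factorial * (c ξ * eval ξ.rep G) = 0 :=
    calc d.factorial * (c ξ * eval ξ.rep G)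
        = d.factorial * ∑ η ∈ hA.toFinset, c η * eval η.rep G * eval η.rep (W ξ) := by
          rw [hW.sum_mul_eval hA hξ]
      _ = apolarPairing (W ξ * G) f := by
          rw [hc, apolarPairing_sum_smul_lin_pow hWG]
          simp only [map_mul, mul_assoc, mul_comm (eval _ G)]
      _ = 0 := by rw [apolarPairing_apply, apolar_mul, hGf, apolar_zero_right, coeff_zero]
  simpa [Nat.factorial_ne_zero, coeff_ne_zero_of_isMinApolar hd.ne' hmin hc hξ] using key

theorem stmt2 {n d : ℕ} (f : MvPolynomial (Fin (n + 1)) ℂ) (hf : f.IsHomogeneous d)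
    (A : Set (Pt n)) (hmin : isMinApolar d f A) (hreg : interpReg A ≤ d) :
    ∀ k ≤ d - interpReg A, idealPiece (vanishingIdeal A) k = perpPiece f k := by
  intro k hk
  ext G
  refine ⟨fun ⟨hGk, hGA⟩ => ⟨hGk, hmin.2.1 G hGA⟩, fun hG => ⟨hG.1, ?_⟩⟩
  exact mem_vanishingIdeal_of_eval_eq_zero hG.1 fun ξ hξ =>
    eval_eq_zero_of_mem_perpPiece hf hmin (by omega) hG hξ

end
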